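/- arXiv:1207.1517 — 3 statements merged into one kernel-verified Lean document; each statement's English description precedes it below -/
import Mathlib

section
/- Let G, K, d, M, N and p, q be positive integers with 1 ≤ p ≤ G−1, 1 ≤ q ≤ (G−1)·K, and K·p + q ≤ G·K. If M + N ≥ (G·K+1)·d, p·M < (p·K + q)·d, and q·N < (p·K + q)·d, then (p·K + q)·(p + q) > (G·K + 1)·p·q, equivalently K·p² − (G−1)·K·p·q + q² > 0. -/
theorem stmt_3 (G K d M N p q : ℕ) (hG : 0 < G) (hK : 0 < K) (hd : 0 < d)
    (hp1 : 1 ≤ p) (hpG : p ≤ G - 1) (hq1 : 1 ≤ q) (hqG : q ≤ (G - 1) * K)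
    (hpq : K * p + q ≤ G * K)
    (hMN : (G * K + 1) * d ≤ M + N)
    (hM : p * M < (p * K + q) * d) (hN : q * N < (p * K + q) * d) :
    (p * K + q) * (p + q) > (G * K + 1) * p * q ∧
    K * p ^ 2 + q ^ 2 > (G - 1) * K * p * q := by
  obtain ⟨g, rfl⟩ : ∃ g, G = g + 1 := ⟨G - 1, by omega⟩
  simp only [Nat.add_sub_cancel] at *
  have hq : 0 < q := hq1
  have hp : 0 < p := hp1
  have hMq := Nat.mul_lt_mul_of_lt_of_le hN (le_refl q) hq
  have key : ((g + 1) * K + 1) * p * q * d < (p * K + q) * (p + q) * d := by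
    have a1 : q * (p * M) < q * ((p * K + q) * d) :=
      Nat.mul_lt_mul_of_le_of_lt (le_refl q) hM hq
    have a2 : p * (q * N) < p * ((p * K + q) * d) :=
      Nat.mul_lt_mul_of_le_of_lt (le_refl p) hN hp
    have a3 : (p * q) * (((g + 1) * K + 1) * d) ≤ (p * q) * (M + N) :=
      Nat.mul_le_mul_left _ hMN
    nlinarith [a1, a2, a3]
  have h2 : (p * K + q) * (p + q) > ((g + 1) * K + 1) * p * q :=
    lt_of_mul_lt_mul_right key (le_of_lt hd)
  refine ⟨h2, ?_⟩
  nlinarith [h2]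
end

section
/- Let G, K_1,…,K_G, d be positive integers, and for each i let M_i and N_{i,k} (k = 1,…,K_i) be positive integers divisible by d with M_i ≥ K_i·d and N_{i,k} ≥ d. Suppose the proper condition holds: for every set I of ordered pairs (i,j), i ≠ j, and subsets 𝒦_i ⊆ {1,…,K_i}, Σ_{j : (i,j)∈I} (M_j − K_j·d)·K_j + Σ_{i : (i,j)∈I} Σ_{k ∈ 𝒦_i} (N_{i,k} − d) ≥ Σ_{(i,j)∈I} K_j·|𝒦_i|·d. Then for all disjoint subsets I_A, I_B of {1,…,G} and subsets 𝒦_i ⊆ {1,…,K_i}: max( Σ_{j∈I_A} M_j, Σ_{i∈I_B} Σ_{k∈𝒦_i} N_{i,k} ) ≥ Σ_{j∈I_A} K_j·d + Σ_{i∈I_B} |𝒦_i|·d. -/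
theorem stmt_5 (G d : ℕ) (hG : 0 < G) (hd : 0 < d)
    (K M : ℕ → ℕ) (N : ℕ → ℕ → ℕ)
    (hKpos : ∀ i, 0 < K i) (hMpos : ∀ i, 0 < M i) (hNpos : ∀ i k, 0 < N i k)
    (hMdvd : ∀ i, d ∣ M i) (hNdvd : ∀ i k, d ∣ N i k)
    (hM : ∀ i, K i * d ≤ M i) (hN : ∀ i k, d ≤ N i k)
    (hproper : ∀ I : Finset (ℕ × ℕ),
      (∀ p ∈ I, 1 ≤ p.1 ∧ p.1 ≤ G ∧ 1 ≤ p.2 ∧ p.2 ≤ G ∧ p.1 ≠ p.2) →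
      ∀ 𝒦 : ℕ → Finset ℕ, (∀ i, 𝒦 i ⊆ Finset.Icc 1 (K i)) →
      ∑ p ∈ I, K p.2 * (𝒦 p.1).card * d ≤
        ∑ j ∈ I.image Prod.snd, (M j - K j * d) * K j +
          ∑ i ∈ I.image Prod.fst, ∑ k ∈ 𝒦 i, (N i k - d)) :
    ∀ I_A I_B : Finset ℕ, I_A ⊆ Finset.Icc 1 G → I_B ⊆ Finset.Icc 1 G →
      Disjoint I_A I_B →
      ∀ 𝒦 : ℕ → Finset ℕ, (∀ i, 𝒦 i ⊆ Finset.Icc 1 (K i)) →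
      ∑ j ∈ I_A, K j * d + ∑ i ∈ I_B, (𝒦 i).card * d ≤
        max (∑ j ∈ I_A, M j) (∑ i ∈ I_B, ∑ k ∈ 𝒦 i, N i k) := by
  intro I_A I_B hA hB hdisj 𝒦 h𝒦
  set A := ∑ j ∈ I_A, K j with hAdef
  set B := ∑ i ∈ I_B, (𝒦 i).card with hBdef
  set P := ∑ j ∈ I_A, M j with hPdef
  set Q := ∑ i ∈ I_B, ∑ k ∈ 𝒦 i, N i k with hQdef
  have hlhs1 : ∑ j ∈ I_A, K j * d = A * d := (Finset.sum_mul ..).symm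
  have hlhs2 : ∑ i ∈ I_B, (𝒦 i).card * d = B * d := (Finset.sum_mul ..).symm
  have hAdP : A * d ≤ P := by
    rw [← hlhs1]; exact Finset.sum_le_sum fun j _ => hM j
  have hBdQ : B * d ≤ Q := by
    rw [← hlhs2]
    refine Finset.sum_le_sum fun i _ => ?_
    calc (𝒦 i).card * d = ∑ _k ∈ 𝒦 i, d := by simp [mul_comm]
    _ ≤ ∑ k ∈ 𝒦 i, N i k := Finset.sum_le_sum fun k _ => hN i k
  rw [hlhs1, hlhs2]
  rcases Nat.eq_zero_or_pos A with hA0 | hApos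
  · rw [hA0]; simpa using le_trans hBdQ (le_max_right _ _)
  rcases Nat.eq_zero_or_pos B with hB0 | hBpos
  · rw [hB0]; simpa using le_trans hAdP (le_max_left _ _)
  obtain ⟨a, ha⟩ : ∃ a, A = a + 1 := ⟨A - 1, by omega⟩
  obtain ⟨b, hb⟩ : ∃ b, B = b + 1 := ⟨B - 1, by omega⟩
  by_contra hcon
  push_neg at hcon
  have hP : P < A * d + B * d := lt_of_le_of_lt (le_max_left _ _) hcon
  have hQ : Q < A * d + B * d := lt_of_le_of_lt (le_max_right _ _) hcon
  have hdP : d ∣ P := Finset.dvd_sum fun j _ => hMdvd j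
  have hdQ : d ∣ Q := Finset.dvd_sum fun i _ => Finset.dvd_sum fun k _ => hNdvd i k
  -- P ≤ A*d + b*d
  have hP' : P ≤ A * d + b * d := by
    obtain ⟨c, hc⟩ := hdP
    have : d * c < (A + B) * d := by rw [← hc]; linarith
    have hcAB : c < A + B := by
      by_contra hcc
      push_neg at hcc
      have : (A + B) * d ≤ d * c := by rw [mul_comm d c]; exact Nat.mul_le_mul_right d hcc
      omega
    have : c ≤ A + b := by omega
    calc P = d * c := hc
    _ ≤ d * (A + b) := Nat.mul_le_mul_left d this
    _ = A * d + b * d := by ring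
  have hQ' : Q ≤ B * d + a * d := by
    obtain ⟨c, hc⟩ := hdQ
    have : d * c < (A + B) * d := by rw [← hc]; linarith
    have hcAB : c < A + B := by
      by_contra hcc
      push_neg at hcc
      have : (A + B) * d ≤ d * c := by rw [mul_comm d c]; exact Nat.mul_le_mul_right d hcc
      omega
    have : c ≤ B + a := by omega
    calc Q = d * c := hc
    _ ≤ d * (B + a) := Nat.mul_le_mul_left d this
    _ = B * d + a * d := by ring
  have h1 : P - A * d ≤ b * d := by omega
  have h2 : Q - B * d ≤ a * d := by omega
  have hIA : I_A.Nonempty := by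
    rcases I_A.eq_empty_or_nonempty with h | h
    · rw [h] at hAdef; simp at hAdef; omega
    · exact h
  have hIB : I_B.Nonempty := by
    rcases I_B.eq_empty_or_nonempty with h | h
    · rw [h] at hBdef; simp at hBdef; omega
    · exact h
  have key := hproper (I_B ×ˢ I_A) ?_ 𝒦 h𝒦
  · rw [Finset.product_image_snd hIB, Finset.product_image_fst hIA] at key
    have hLHS : ∑ p ∈ I_B ×ˢ I_A, K p.2 * (𝒦 p.1).card * d = A * (B * d) := by
      rw [Finset.sum_product]
      have : ∀ i ∈ I_B, ∑ j ∈ I_A, K j * (𝒦 i).card * d = A * ((𝒦 i).card * d) := by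
        intro i _
        simp_rw [mul_assoc]
        exact (Finset.sum_mul ..).symm
      rw [Finset.sum_congr rfl this, ← Finset.mul_sum, ← Finset.sum_mul]
    have hR1 : ∑ j ∈ I_A, (M j - K j * d) * K j ≤ (P - A * d) * A := by
      calc ∑ j ∈ I_A, (M j - K j * d) * K j
          ≤ ∑ j ∈ I_A, (M j - K j * d) * A := by
            refine Finset.sum_le_sum fun j hj => ?_
            exact Nat.mul_le_mul_left _ (Finset.single_le_sum (f := K) (fun i _ => Nat.zero_le _) hj)
      _ = (∑ j ∈ I_A, (M j - K j * d)) * A := (Finset.sum_mul ..).symm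
      _ = (P - A * d) * A := by
            rw [Finset.sum_tsub_distrib _ (fun j _ => hM j), hlhs1]
    have hR2 : ∑ i ∈ I_B, ∑ k ∈ 𝒦 i, (N i k - d) ≤ Q - B * d := by
      have : ∀ i ∈ I_B, ∑ k ∈ 𝒦 i, (N i k - d) = (∑ k ∈ 𝒦 i, N i k) - (𝒦 i).card * d := by
        intro i _
        rw [Finset.sum_tsub_distrib _ (fun k _ => hN i k)]
        simp [mul_comm]
      rw [Finset.sum_congr rfl this,
        Finset.sum_tsub_distrib _ (fun i _ => by
          calc (𝒦 i).card * d = ∑ _k ∈ 𝒦 i, d := by simp [mul_comm]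
          _ ≤ ∑ k ∈ 𝒦 i, N i k := Finset.sum_le_sum fun k _ => hN i k), hlhs2]
    rw [hLHS] at key
    have hfin : A * (B * d) ≤ b * d * A + a * d :=
      le_trans key (add_le_add (le_trans hR1 (Nat.mul_le_mul_right _ h1)) (le_trans hR2 h2))
    rw [ha, hb] at hfin
    nlinarith
  · intro p hp
    rw [Finset.mem_product] at hp
    have h1 := hB hp.1
    have h2 := hA hp.2
    rw [Finset.mem_Icc] at h1 h2
    refine ⟨h1.1, h1.2, h2.1, h2.2, fun heq => ?_⟩
    exact (Finset.disjoint_left.mp hdisj hp.2) (heq ▸ hp.1)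
end

section
/- Let G ≥ 2, K ≥ 1, d ≥ 1 be integers with not both G = 2 and K = 1. Then the two regions of (M, N) ∈ ℕ² given by Case I: max(M, (G−1)·K·N) < G·K·d and M + N ≥ (G·K+1)·d, and Case II: max((G−1)·M, N) < ((G−1)·K + 1)·d and M + N ≥ (G·K+1)·d, are distinct (neither contains the other), while if G = 2 and K = 1 they coincide. -/
/-- The two proper-but-infeasible regions of Corollary 3, as sets of
configurations `(M, N, d)` with `M ≥ K·d`, `N ≥ d`, `d ≥ 1`. They are
distinct (neither contains the other) unless `G = 2` and `K = 1`,
in which case they coincide. -/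
theorem stmt_14 (G K : ℕ) (hG : 2 ≤ G) (hK : 1 ≤ K) :
    (¬ (G = 2 ∧ K = 1) →
      (∃ M N d : ℕ, 1 ≤ d ∧ K * d ≤ M ∧ d ≤ N ∧
        (max M ((G - 1) * K * N) < G * K * d ∧ (G * K + 1) * d ≤ M + N) ∧
        ¬ (max ((G - 1) * M) N < ((G - 1) * K + 1) * d ∧ (G * K + 1) * d ≤ M + N)) ∧
      (∃ M N d : ℕ, 1 ≤ d ∧ K * d ≤ M ∧ d ≤ N ∧
        (max ((G - 1) * M) N < ((G - 1) * K + 1) * d ∧ (G * K + 1) * d ≤ M + N) ∧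
        ¬ (max M ((G - 1) * K * N) < G * K * d ∧ (G * K + 1) * d ≤ M + N))) ∧
    ((G = 2 ∧ K = 1) → ∀ M N d : ℕ,
      ((max M ((G - 1) * K * N) < G * K * d ∧ (G * K + 1) * d ≤ M + N) ↔
       (max ((G - 1) * M) N < ((G - 1) * K + 1) * d ∧ (G * K + 1) * d ≤ M + N))) := by
  obtain ⟨g, rfl⟩ : ∃ g, G = g + 2 := ⟨G - 2, by omega⟩
  obtain ⟨k, rfl⟩ : ∃ k, K = k + 1 := ⟨K - 1, by omega⟩
  constructor
  · intro hne
    have hgk : 1 ≤ g + k := by omega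
    have h1 : (g + 2) - 1 = g + 1 := by omega
    rw [h1]
    constructor
    · -- witness for I \ II : M = G²K - 1, N = G+1, d = G
      have hApos : 0 < (g+2)^2*(k+1) := by positivity
      obtain ⟨A, hA⟩ : ∃ A, (g+2)^2*(k+1) = A + 1 :=
        ⟨(g+2)^2*(k+1) - 1, (Nat.succ_pred_eq_of_pos hApos).symm⟩
      refine ⟨A, g + 3, g + 2, by omega, by nlinarith, by omega, ⟨?_, ?_⟩, ?_⟩
      · rw [max_lt_iff]
        exact ⟨by nlinarith, by nlinarith⟩
      · nlinarith
      · rintro ⟨h2, -⟩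
        rw [max_lt_iff] at h2
        have h3 := h2.1
        rcases Nat.eq_zero_or_pos g with hg | hg
        · subst hg; nlinarith
        · nlinarith [sq_nonneg (g+1)]
    · -- witness for II \ I : M = KG+1, N = ((G-1)K+1)G - 1, d = G
      have hBpos : 0 < ((g+1)*(k+1)+1)*(g+2) := by positivity
      obtain ⟨B, hB⟩ : ∃ B, ((g+1)*(k+1)+1)*(g+2) = B + 1 :=
        ⟨((g+1)*(k+1)+1)*(g+2) - 1, (Nat.succ_pred_eq_of_pos hBpos).symm⟩
      have h5 : 2*(g+2) ≤ ((g+1)*(k+1)+1)*(g+2) :=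
        Nat.mul_le_mul_right _ (by nlinarith)
      refine ⟨(k+1)*(g+2) + 1, B, g + 2, by omega, by nlinarith, by linarith,
        ⟨?_, ?_⟩, ?_⟩
      · rw [max_lt_iff]
        exact ⟨by nlinarith, by nlinarith⟩
      · nlinarith
      · rintro ⟨h2, -⟩
        rw [max_lt_iff] at h2
        have h3 := h2.2
        rcases Nat.eq_zero_or_pos g with hg | hg
        · subst hg; nlinarith
        · nlinarith [sq_nonneg (g+1)]
  · rintro ⟨hG2, hK1⟩ M N d
    have hg : g = 0 := by omega
    have hk : k = 0 := by omega
    subst hg hk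
    norm_num
end
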